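/- arXiv:1602.06307 — 5 statements merged into one kernel-verified Lean document; each statement's English description precedes it below -/
import Mathlib

section
/- For n ≥ 1, real a, p, q with p ≠ q, and x ≠ 0, D_{p,q}[(x ⊖ a)^n_{p,q}](x) = [n]_{p,q} (px ⊖ a)^{n-1}_{p,q}, where the (p,q)-power basis is (x ⊖ a)^n_{p,q} = ∏_{j=0}^{n-1}(p^j x - q^j a). -/
noncomputable section

/-- The (p,q)-number [n]_{p,q} = (p^n - q^n)/(p - q). -/
def pqNum (p q : ℝ) (n : ℕ) : ℝ := (p ^ n - q ^ n) / (p - q)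

/-- The (p,q)-factorial [n]_{p,q}!. -/
def pqFactorial (p q : ℝ) (n : ℕ) : ℝ := ∏ k ∈ Finset.range n, pqNum p q (k + 1)

/-- The (p,q)-binomial coefficient. -/
def pqBinom (p q : ℝ) (n k : ℕ) : ℝ :=
  pqFactorial p q n / (pqFactorial p q (n - k) * pqFactorial p q k)

/-- The (p,q)-power basis (a ⊖ b)^n_{p,q} = ∏_{j=0}^{n-1} (p^j a - q^j b). -/
def pqPow (p q a b : ℝ) (n : ℕ) : ℝ := ∏ j ∈ Finset.range n, (p ^ j * a - q ^ j * b)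

/-- The (p,q)-derivative. -/
def pqDeriv (p q : ℝ) (f : ℝ → ℝ) (x : ℝ) : ℝ := (f (p * x) - f (q * x)) / ((p - q) * x)

/-- The (p,q)-integral of f over [0,1] (case 0 < q < p). -/
def pqInt (p q : ℝ) (f : ℝ → ℝ) : ℝ :=
  (p - q) * ∑' k : ℕ, (q ^ k / p ^ (k + 1)) * f (q ^ k / p ^ (k + 1))

/-- The (p,q)-Beta function B_{p,q}(m,n) = ∫₀¹ x^{m-1} (1 ⊖ qx)^{n-1} d_{p,q}x. -/
def pqBeta (p q : ℝ) (m n : ℕ) : ℝ :=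
  pqInt p q (fun x => x ^ (m - 1) * pqPow p q 1 (q * x) (n - 1))

/-- The (p,q)-Gamma function: Γ_{p,q}(n+1) = [n]_{p,q}!. -/
def pqGamma (p q : ℝ) (n : ℕ) : ℝ := pqFactorial p q (n - 1)

/-- The (p,q)-Bernstein basis b_{n,k}^{p,q}(1,x). -/
def bBasis (p q : ℝ) (n k : ℕ) (x : ℝ) : ℝ :=
  pqBinom p q n k * p ^ (k * (k - 1) / 2) / p ^ (n * (n - 1) / 2) * x ^ k *
    pqPow p q 1 x (n - k)

/-- The kernel b_{n,k}^{p,q}(t) = [n choose k] t^k (1 ⊖ qt)^{n-k}. -/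
def bKernel (p q : ℝ) (n k : ℕ) (t : ℝ) : ℝ :=
  pqBinom p q n k * t ^ k * pqPow p q 1 (q * t) (n - k)

/-- The (p,q)-Bernstein operator B_{n,p,q}(f,x). -/
def pqBernstein (p q : ℝ) (n : ℕ) (f : ℝ → ℝ) (x : ℝ) : ℝ :=
  ∑ k ∈ Finset.range (n + 1),
    bBasis p q n k x * f (p ^ (n - k) * pqNum p q k / pqNum p q n)

/-- The (p,q)-Bernstein-Durrmeyer operator D_n^{p,q}(f,x). -/
def pqDurrmeyer (p q : ℝ) (n : ℕ) (f : ℝ → ℝ) (x : ℝ) : ℝ :=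
  pqNum p q (n + 1) *
    ∑ k ∈ Finset.Icc 1 n, (p ^ ((n - k + 1) * (n + k) / 2))⁻¹ * bBasis p q n k x *
      pqInt p q (fun t => bKernel p q n (k - 1) t * f t)
  + bBasis p q n 0 x * f 0

theorem pqDeriv_pqPow_left (n : ℕ) (hn : 1 ≤ n) (a p q x : ℝ) (hpq : p ≠ q) (hx : x ≠ 0) :
    pqDeriv p q (fun y => pqPow p q y a n) x =
      pqNum p q n * pqPow p q (p * x) a (n - 1) := by
  obtain ⟨m, rfl⟩ : ∃ m, n = m + 1 := ⟨n - 1, (Nat.succ_pred_eq_of_pos hn).symm⟩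
  have hP : pqPow p q (p * x) a (m + 1)
      = pqPow p q (p * x) a m * (p ^ (m + 1) * x - q ^ m * a) := by
    rw [pqPow, Finset.prod_range_succ]
    ring_nf
    rw [pqPow]
    ring
  have hQ : pqPow p q (q * x) a (m + 1)
      = (q * x - a) * (q ^ m * pqPow p q (p * x) a m) := by
    rw [pqPow, Finset.prod_range_succ']
    simp only [pow_zero, one_mul]
    rw [mul_comm]
    congr 1
    rw [pqPow]
    calc ∏ k ∈ Finset.range m, (p ^ (k + 1) * (q * x) - q ^ (k + 1) * a)
        = ∏ j ∈ Finset.range m, q * (p ^ j * (p * x) - q ^ j * a) := by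
          apply Finset.prod_congr rfl; intro j _; ring
      _ = q ^ m * ∏ j ∈ Finset.range m, (p ^ j * (p * x) - q ^ j * a) := by
          rw [Finset.prod_mul_distrib, Finset.prod_const, Finset.card_range]
  have hsub : p - q ≠ 0 := sub_ne_zero.mpr hpq
  rw [pqDeriv, hP, hQ, pqNum]
  simp only [Nat.add_sub_cancel]
  field_simp
  ring
end
end

section
/- For n ≥ 1, real a, p, q with p ≠ q, and x ≠ 0, D_{p,q}[(a ⊖ x)^n_{p,q}](x) = -[n]_{p,q} (a ⊖ qx)^{n-1}_{p,q}, where (a ⊖ x)^n_{p,q} = ∏_{j=0}^{n-1}(p^j a - q^j x) is viewed as a function of x. -/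
noncomputable section

theorem pqDeriv_pqPow_right (n : ℕ) (hn : 1 ≤ n) (a p q x : ℝ) (hpq : p ≠ q) (hx : x ≠ 0) :
    pqDeriv p q (fun y => pqPow p q a y n) x =
      -(pqNum p q n) * pqPow p q a (q * x) (n - 1) := by
  obtain ⟨m, rfl⟩ : ∃ m, n = m + 1 := ⟨n - 1, (Nat.succ_pred_eq_of_pos hn).symm⟩
  have hG : pqPow p q a (q * x) (m + 1) =
      pqPow p q a (q * x) m * (p ^ m * a - q ^ (m + 1) * x) := by
    simp only [pqPow, Finset.prod_range_succ]; congr 1; ring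
  have hP : pqPow p q a (p * x) (m + 1) =
      p ^ m * pqPow p q a (q * x) m * (a - p * x) := by
    simp only [pqPow, Finset.prod_range_succ']
    have : ∀ j ∈ Finset.range m, (p ^ (j + 1) * a - q ^ (j + 1) * (p * x)) =
        p * (p ^ j * a - q ^ j * (q * x)) := by intro j _; ring
    rw [Finset.prod_congr rfl this, Finset.prod_mul_distrib, Finset.prod_const,
      Finset.card_range]
    ring
  have hpq' : p - q ≠ 0 := sub_ne_zero.mpr hpq
  simp only [pqDeriv, hG, hP, Nat.add_sub_cancel, pqNum]
  field_simp
  ring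
end
end

section
/- For 0 < q < p ≤ 1 and natural numbers m ≥ 2, n ≥ 1, the (p,q)-Beta function satisfies the recurrence B_{p,q}(m,n) = ([m-1]_{p,q} / (p^{m-1} [n]_{p,q})) · B_{p,q}(m-1, n+1). -/
noncomputable section

/-! The (p,q)-integral is a telescoping sum over the geometric nodes `q^k/p^(k+1)`, so it inverts
the (p,q)-derivative: `∫₀¹ D_{p,q}F d_{p,q}x = F 1 - F 0`. Applying this to
`F x = x^(m-1) (1 ⊖ x)^n_{p,q}`, which vanishes at `0` and `1`, and expanding `D_{p,q}F` by the
(p,q)-product rule gives `[m-1] B(m-1, n+1) - p^(m-1) [n] B(m, n) = 0`. -/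

open Filter Topology

section PQCalculus

variable {p q : ℝ}

lemma pqNum_pos (hq : 0 ≤ q) (hqp : q < p) {n : ℕ} (hn : n ≠ 0) : 0 < pqNum p q n :=
  div_pos (sub_pos.mpr (pow_lt_pow_left₀ hqp hq hn)) (sub_pos.mpr hqp)

lemma pqPow_succ' (a b : ℝ) (n : ℕ) :
    pqPow p q a b (n + 1) = (a - b) * pqPow p q (p * a) (q * b) n := by
  simp only [pqPow, Finset.prod_range_succ', pow_succ]
  ring_nf

lemma pqPow_mul_mul (c a b : ℝ) (n : ℕ) :
    pqPow p q (c * a) (c * b) n = c ^ n * pqPow p q a b n := by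
  have factor (j : ℕ) : p ^ j * (c * a) - q ^ j * (c * b) = c * (p ^ j * a - q ^ j * b) := by ring
  simp only [pqPow, factor, Finset.prod_mul_distrib, Finset.prod_const, Finset.card_range]

lemma pqPow_self_succ (a : ℝ) (n : ℕ) : pqPow p q a a (n + 1) = 0 := by
  rw [pqPow_succ', sub_self, zero_mul]

@[fun_prop]
lemma Continuous.pqPow {a b : ℝ → ℝ} (ha : Continuous a) (hb : Continuous b) (n : ℕ) :
    Continuous fun x => pqPow p q (a x) (b x) n :=
  continuous_finsetProd _ fun _ _ => by fun_prop

lemma pqDeriv_mul (f g : ℝ → ℝ) (x : ℝ) :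
    pqDeriv p q (fun y => f y * g y) x =
      f (p * x) * pqDeriv p q g x + g (q * x) * pqDeriv p q f x := by
  simp only [pqDeriv]
  ring

lemma pqDeriv_pow_succ (hpq : p ≠ q) {x : ℝ} (hx : x ≠ 0) (a : ℕ) :
    pqDeriv p q (fun y => y ^ (a + 1)) x = pqNum p q (a + 1) * x ^ a := by
  have : p - q ≠ 0 := sub_ne_zero.mpr hpq
  simp only [pqDeriv, pqNum, mul_pow]
  field_simp
  ring

lemma pqDeriv_pqPow_succ (hpq : p ≠ q) {x : ℝ} (hx : x ≠ 0) (n : ℕ) :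
    pqDeriv p q (fun y => pqPow p q 1 y (n + 1)) x =
      -(pqNum p q (n + 1) * pqPow p q 1 (q * x) n) := by
  have : p - q ≠ 0 := sub_ne_zero.mpr hpq
  have at_px : pqPow p q 1 (p * x) (n + 1) = (1 - p * x) * p ^ n * pqPow p q 1 (q * x) n := by
    rw [pqPow_succ', mul_left_comm q p x, pqPow_mul_mul, mul_assoc]
  have at_qx : pqPow p q 1 (q * x) (n + 1) =
      pqPow p q 1 (q * x) n * (p ^ n - q ^ n * (q * x)) := by
    rw [pqPow, Finset.prod_range_succ, mul_one]; rfl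
  simp only [pqDeriv, pqNum, at_px, at_qx]
  field_simp
  ring

lemma pqDeriv_pow_mul_pqPow (hpq : p ≠ q) {x : ℝ} (hx : x ≠ 0) (a n : ℕ) :
    pqDeriv p q (fun y => y ^ (a + 1) * pqPow p q 1 y (n + 1)) x =
      pqNum p q (a + 1) * (x ^ a * pqPow p q 1 (q * x) (n + 1)) -
        p ^ (a + 1) * pqNum p q (n + 1) * (x ^ (a + 1) * pqPow p q 1 (q * x) n) := by
  rw [pqDeriv_mul, pqDeriv_pow_succ hpq hx, pqDeriv_pqPow_succ hpq hx]
  ring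

def PQIntegrable (p q : ℝ) (f : ℝ → ℝ) : Prop :=
  Summable fun k : ℕ => q ^ k / p ^ (k + 1) * f (q ^ k / p ^ (k + 1))

lemma pqNode_eq (k : ℕ) : q ^ k / p ^ (k + 1) = (q / p) ^ k / p := by
  rw [div_pow, pow_succ, div_div]

lemma PQIntegrable.of_continuousOn (hq : 0 < q) (hqp : q < p) {f : ℝ → ℝ}
    (hf : ContinuousOn f (Set.Icc 0 p⁻¹)) : PQIntegrable p q f := by
  have hp : 0 < p := hq.trans hqp
  obtain ⟨C, hC⟩ := isCompact_Icc.exists_bound_of_continuousOn hf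
  have hr : q / p < 1 := (div_lt_one hp).mpr hqp
  refine Summable.of_norm_bounded
    ((summable_geometric_of_lt_one (by positivity) hr).mul_left (C / p)) fun k => ?_
  have hnode : (q / p) ^ k / p ∈ Set.Icc 0 p⁻¹ :=
    ⟨by positivity, div_le_of_le_mul₀ hp.le (by positivity)
      (by rw [inv_mul_cancel₀ hp.ne']; exact pow_le_one₀ (by positivity) hr.le)⟩
  rw [pqNode_eq, norm_mul, Real.norm_of_nonneg hnode.1]
  calc (q / p) ^ k / p * ‖f ((q / p) ^ k / p)‖ ≤ (q / p) ^ k / p * C :=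
        mul_le_mul_of_nonneg_left (hC _ hnode) hnode.1
    _ = C / p * (q / p) ^ k := by ring

lemma PQIntegrable.const_mul {f : ℝ → ℝ} (hf : PQIntegrable p q f) (c : ℝ) :
    PQIntegrable p q fun x => c * f x := by
  simpa only [PQIntegrable, mul_left_comm c] using hf.mul_left c

lemma PQIntegrable.sub {f g : ℝ → ℝ} (hf : PQIntegrable p q f) (hg : PQIntegrable p q g) :
    PQIntegrable p q fun x => f x - g x := by
  simpa only [PQIntegrable, mul_sub] using Summable.sub hf hg

lemma pqInt_const_mul (c : ℝ) (f : ℝ → ℝ) :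
    pqInt p q (fun x => c * f x) = c * pqInt p q f := by
  simp only [pqInt, mul_left_comm _ c, tsum_mul_left]

lemma pqInt_sub {f g : ℝ → ℝ} (hf : PQIntegrable p q f) (hg : PQIntegrable p q g) :
    pqInt p q (fun x => f x - g x) = pqInt p q f - pqInt p q g := by
  rw [pqInt, pqInt, pqInt, ← mul_sub, ← hf.tsum_sub hg]
  simp_rw [mul_sub]

theorem pqInt_eq_sub_of_pqDeriv (hq : 0 < q) (hqp : q < p) {F f : ℝ → ℝ}
    (hF : ContinuousAt F 0) (hderiv : ∀ x, 0 < x → pqDeriv p q F x = f x)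
    (hf : PQIntegrable p q f) : pqInt p q f = F 1 - F 0 := by
  have hp : 0 < p := hq.trans hqp
  set r := q / p
  have hterm (k : ℕ) : (p - q) * (q ^ k / p ^ (k + 1) * f (q ^ k / p ^ (k + 1))) =
      F (r ^ k) - F (r ^ (k + 1)) := by
    have hpq : p - q ≠ 0 := sub_ne_zero.mpr hqp.ne'
    rw [← hderiv _ (by positivity), pqDeriv, pqNode_eq]
    field_simp
    simp only [r, pow_succ, div_pow]
    field_simp
  have hsum : HasSum (fun k => F (r ^ k) - F (r ^ (k + 1))) (pqInt p q f) := by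
    have := hf.hasSum.mul_left (p - q)
    simp only [hterm] at this
    exact this
  have hlim : Tendsto (fun n => F (r ^ 0) - F (r ^ n)) atTop (𝓝 (F 1 - F 0)) := by
    have hr : Tendsto (fun n => r ^ n) atTop (𝓝 0) :=
      tendsto_pow_atTop_nhds_zero_of_lt_one (by positivity) ((div_lt_one hp).mpr hqp)
    simpa using (hF.tendsto.comp hr).const_sub (F 1)
  refine tendsto_nhds_unique ?_ hlim
  simpa only [Finset.sum_range_sub'] using hsum.tendsto_sum_nat

end PQCalculus

theorem pqBeta_rec_general (p q : ℝ) (hq : 0 < q) (hqp : q < p)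
    (m n : ℕ) (hm : 2 ≤ m) (hn : 1 ≤ n) :
    pqBeta p q m n =
      pqNum p q (m - 1) / (p ^ (m - 1) * pqNum p q n) * pqBeta p q (m - 1) (n + 1) := by
  obtain ⟨a, rfl⟩ : ∃ a, m = a + 2 := ⟨m - 2, by omega⟩
  obtain ⟨N, rfl⟩ : ∃ N, n = N + 1 := ⟨n - 1, by omega⟩
  have hA : PQIntegrable p q fun x => x ^ (a + 1) * pqPow p q 1 (q * x) N :=
    .of_continuousOn hq hqp (by fun_prop)
  have hB : PQIntegrable p q fun x => x ^ a * pqPow p q 1 (q * x) (N + 1) :=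
    .of_continuousOn hq hqp (by fun_prop)
  have ftc := pqInt_eq_sub_of_pqDeriv hq hqp (F := fun y => y ^ (a + 1) * pqPow p q 1 y (N + 1))
    (by fun_prop) (fun x hx => pqDeriv_pow_mul_pqPow hqp.ne' hx.ne' a N)
    ((hB.const_mul _).sub (hA.const_mul _))
  rw [pqInt_sub (hB.const_mul _) (hA.const_mul _), pqInt_const_mul, pqInt_const_mul] at ftc
  simp only [pqPow_self_succ, zero_pow (Nat.succ_ne_zero a), mul_zero, zero_mul, sub_zero] at ftc
  have hp : 0 < p := hq.trans hqp
  have hN := pqNum_pos hq.le hqp (n := N + 1) (by omega)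
  have hm1 : a + 2 - 1 = a + 1 := rfl
  simp only [pqBeta, hm1, Nat.add_sub_cancel]
  field_simp
  linear_combination -ftc

theorem pqBeta_rec (p q : ℝ) (hq : 0 < q) (hqp : q < p) (hp : p ≤ 1)
    (m n : ℕ) (hm : 2 ≤ m) (hn : 1 ≤ n) :
    pqBeta p q m n =
      pqNum p q (m - 1) / (p ^ (m - 1) * pqNum p q n) * pqBeta p q (m - 1) (n + 1) :=
  pqBeta_rec_general p q hq hqp m n hm hn
end
end

section
/- For 0 < q < p ≤ 1 and natural numbers m, n ≥ 1, B_{p,q}(m, n+1) = p^{n+m-1} · (p^n - q^n)/(p^{n+m} - q^{n+m}) · B_{p,q}(m, n). -/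
noncomputable section

namespace PQaux

variable {p q : ℝ}

/-- The node points q^k/p^(k+1). -/
def xx (p q : ℝ) (k : ℕ) : ℝ := q ^ k / p ^ (k + 1)

/-- P N k = ∏_{j<N} (p^j - q^(j+1) x_k). -/
def PP (p q : ℝ) (N k : ℕ) : ℝ :=
  ∏ j ∈ Finset.range N, (p ^ j - q ^ (j + 1) * xx p q k)

/-- Shifted product Q N k = ∏_{j<N} (p^(j+1) - q^(j+2) x_k). -/
def QQ (p q : ℝ) (N k : ℕ) : ℝ :=
  ∏ j ∈ Finset.range N, (p ^ (j + 1) - q ^ (j + 2) * xx p q k)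

def FF (p q : ℝ) (m N k : ℕ) : ℝ := xx p q k ^ m * PP p q N k
def GG (p q : ℝ) (m N k : ℕ) : ℝ := xx p q k ^ m * QQ p q N k

section Basic

variable (hq : 0 < q) (hqp : q < p) (hp : p ≤ 1)

include hq hqp in
lemma hp0 : 0 < p := hq.trans hqp

include hq hqp in
lemma xx_pos (k : ℕ) : 0 < xx p q k :=
  div_pos (pow_pos hq _) (pow_pos (hp0 hq hqp) _)

include hq hqp hp in
lemma fac_pos (j k : ℕ) : 0 < p ^ j - q ^ (j + 1) * xx p q k := by
  have hppos : (0:ℝ) < p ^ (k + 1) := pow_pos (hp0 hq hqp) _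
  have h1 : q ^ (j + 1) * xx p q k = q ^ (j + 1 + k) / p ^ (k + 1) := by
    rw [xx, pow_add]; ring
  rw [h1, sub_pos, div_lt_iff₀ hppos, ← pow_add]
  have h3 : j + (k + 1) = j + 1 + k := by omega
  rw [h3]
  exact pow_lt_pow_left₀ hqp hq.le (by omega)

include hq hqp hp in
lemma fac_le_one (j k : ℕ) : p ^ j - q ^ (j + 1) * xx p q k ≤ 1 := by
  have h1 : q ^ (j + 1) * xx p q k > 0 :=
    mul_pos (pow_pos hq _) (xx_pos hq hqp k)
  have h2 : p ^ j ≤ 1 := pow_le_one₀ (hp0 hq hqp).le hp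
  linarith

include hq hqp hp in
lemma PP_pos (N k : ℕ) : 0 < PP p q N k :=
  Finset.prod_pos fun j _ => fac_pos hq hqp hp j k

include hq hqp hp in
lemma PP_le_one (N k : ℕ) : PP p q N k ≤ 1 :=
  Finset.prod_le_one (fun j _ => (fac_pos hq hqp hp j k).le)
    (fun j _ => fac_le_one hq hqp hp j k)

include hq hqp in
lemma xx_pow_eq (m k : ℕ) :
    xx p q k ^ m = (1 / p ^ m) * ((q / p) ^ m) ^ k := by
  have h : xx p q k = (1 / p) * (q / p) ^ k := by
    rw [xx, pow_succ, div_pow]; ring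
  rw [h, mul_pow, ← pow_mul, ← pow_mul, Nat.mul_comm k m, div_pow, one_pow]

include hq hqp hp in
lemma summable_FF {m : ℕ} (hm : 1 ≤ m) (N : ℕ) : Summable (FF p q m N) := by
  have hr0 : (0:ℝ) ≤ (q / p) ^ m :=
    pow_nonneg (div_nonneg hq.le (hp0 hq hqp).le) m
  have hr1 : (q / p) ^ m < 1 := by
    apply pow_lt_one₀ (div_nonneg hq.le (hp0 hq hqp).le) _ (by omega)
    rw [div_lt_one (hp0 hq hqp)]; exact hqp
  have hgeo : Summable (fun k : ℕ => (1 / p ^ m) * ((q / p) ^ m) ^ k) :=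
    (summable_geometric_of_lt_one hr0 hr1).mul_left _
  refine Summable.of_nonneg_of_le (fun k => ?_) (fun k => ?_) hgeo
  · exact le_of_lt (mul_pos (pow_pos (xx_pos hq hqp k) m) (PP_pos hq hqp hp N k))
  · calc FF p q m N k ≤ xx p q k ^ m * 1 := by
          apply mul_le_mul_of_nonneg_left (PP_le_one hq hqp hp N k)
          exact (pow_pos (xx_pos hq hqp k) m).le
      _ = (1 / p ^ m) * ((q / p) ^ m) ^ k := by
          rw [mul_one, xx_pow_eq hq hqp]

include hq hqp in
lemma xx_shift (k : ℕ) : p * xx p q (k + 1) = q * xx p q k := by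
  have hp' : p ≠ 0 := (hp0 hq hqp).ne'
  rw [xx, xx]
  field_simp
  ring

include hq hqp in
lemma PP_shift (N k : ℕ) : p ^ N * PP p q N (k + 1) = QQ p q N k := by
  rw [PP, QQ, ← Finset.card_range N, ← Finset.prod_const,
    Finset.card_range, ← Finset.prod_mul_distrib]
  refine Finset.prod_congr rfl fun j _ => ?_
  have h := xx_shift hq hqp (p := p) (q := q) k
  calc p * (p ^ j - q ^ (j + 1) * xx p q (k + 1))
      = p ^ (j + 1) - q ^ (j + 1) * (p * xx p q (k + 1)) := by ring
    _ = p ^ (j + 1) - q ^ (j + 2) * xx p q k := by rw [h]; ring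

lemma PP_step (N k : ℕ) :
    PP p q (N + 1) k = PP p q N k * (p ^ N - q ^ (N + 1) * xx p q k) :=
  Finset.prod_range_succ _ _

lemma PP_split (N k : ℕ) :
    PP p q (N + 1) k = (1 - q * xx p q k) * QQ p q N k := by
  rw [PP, Finset.prod_range_succ', QQ]
  simp only [pow_zero, zero_add, pow_one]
  rw [mul_comm]

include hq hqp in
lemma key_rel (m N k : ℕ) :
    q ^ m * GG p q m N k = p ^ (N + m) * FF p q m N (k + 1) := by
  rw [GG, FF]
  calc q ^ m * (xx p q k ^ m * QQ p q N k)
      = (q * xx p q k) ^ m * QQ p q N k := by rw [mul_pow]; ring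
    _ = (p * xx p q (k + 1)) ^ m * (p ^ N * PP p q N (k + 1)) := by
        rw [xx_shift hq hqp, PP_shift hq hqp]
    _ = p ^ (N + m) * (xx p q (k + 1) ^ m * PP p q N (k + 1)) := by
        rw [mul_pow, pow_add]; ring

include hq hqp hp in
lemma summable_GG {m : ℕ} (hm : 1 ≤ m) (N : ℕ) : Summable (GG p q m N) := by
  have hq' : q ^ m ≠ 0 := by positivity
  have h : GG p q m N = fun k => (q ^ m)⁻¹ * (p ^ (N + m) * FF p q m N (k + 1)) := by
    funext k
    rw [← key_rel hq hqp m N k]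
    field_simp
  rw [h]
  exact (((summable_nat_add_iff 1).mpr (summable_FF hq hqp hp hm N)).mul_left _).mul_left _

include hq hqp in
lemma FF_zero_rel (m N : ℕ) : p * FF p q (m + 1) N 0 = FF p q m N 0 := by
  have hp' : p ≠ 0 := (hp0 hq hqp).ne'
  have h0 : p * xx p q 0 = 1 := by
    rw [xx, pow_zero, zero_add, pow_one, mul_one_div, div_self hp']
  rw [FF, FF]
  calc p * (xx p q 0 ^ (m + 1) * PP p q N 0)
      = (p * xx p q 0) * (xx p q 0 ^ m * PP p q N 0) := by ring
    _ = xx p q 0 ^ m * PP p q N 0 := by rw [h0, one_mul]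

include hq hqp hp in
lemma Eq1 {m : ℕ} (hm : 1 ≤ m) (N : ℕ) :
    (∑' k, FF p q m (N + 1) k) =
      p ^ N * (∑' k, FF p q m N k) - q ^ (N + 1) * (∑' k, FF p q (m + 1) N k) := by
  have h : ∀ k, FF p q m (N + 1) k
      = p ^ N * FF p q m N k - q ^ (N + 1) * FF p q (m + 1) N k := by
    intro k
    rw [FF, FF, FF, PP_step]
    ring
  rw [tsum_congr h,
    Summable.tsum_sub ((summable_FF hq hqp hp hm N).mul_left _)
      ((summable_FF hq hqp hp (by omega) N).mul_left _),
    tsum_mul_left, tsum_mul_left]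

include hq hqp hp in
lemma Eq2 {m : ℕ} (hm : 1 ≤ m) (N : ℕ) :
    (∑' k, FF p q m (N + 1) k) =
      (∑' k, GG p q m N k) - q * (∑' k, GG p q (m + 1) N k) := by
  have h : ∀ k, FF p q m (N + 1) k = GG p q m N k - q * GG p q (m + 1) N k := by
    intro k
    rw [FF, GG, GG, PP_split]
    ring
  rw [tsum_congr h,
    Summable.tsum_sub (summable_GG hq hqp hp hm N)
      ((summable_GG hq hqp hp (by omega) N).mul_left _),
    tsum_mul_left]

include hq hqp hp in
lemma Eq3 {m : ℕ} (hm : 1 ≤ m) (N : ℕ) :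
    q ^ m * (∑' k, GG p q m N k) =
      p ^ (N + m) * ((∑' k, FF p q m N k) - FF p q m N 0) := by
  have hs := summable_FF hq hqp hp hm N
  have h1 : (∑' k, FF p q m N (k + 1)) = (∑' k, FF p q m N k) - FF p q m N 0 := by
    have := (Summable.tsum_eq_zero_add hs)
    linarith
  rw [← tsum_mul_left, tsum_congr (key_rel hq hqp m N), tsum_mul_left, h1]

include hq hqp hp in
lemma key (m N : ℕ) (hm : 1 ≤ m) :
    (p ^ (N + 1 + m) - q ^ (N + 1 + m)) * (∑' k, FF p q m (N + 1) k) =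
      p ^ (N + m) * (p ^ (N + 1) - q ^ (N + 1)) * (∑' k, FF p q m N k) := by
  have e1 := Eq1 hq hqp hp hm N
  have e2 := Eq2 hq hqp hp hm N
  have e3a := Eq3 hq hqp hp hm N
  have e3b := Eq3 hq hqp hp (m := m + 1) (by omega) N
  have e4 := FF_zero_rel hq hqp (p := p) (q := q) m N
  linear_combination (p ^ (N + m + 1)) * e1 - (q ^ (N + m + 1)) * e2
    - q ^ (N + 1) * e3a + q ^ (N + 1) * e3b - q ^ (N + 1) * p ^ (N + m) * e4

omit hq hqp hp in
lemma beta_eq {m : ℕ} (hm : 1 ≤ m) (n : ℕ) :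
    pqBeta p q m n = (p - q) * ∑' k, FF p q m (n - 1) k := by
  rw [pqBeta, pqInt]
  congr 1
  refine tsum_congr fun k => ?_
  have hx : xx p q k = q ^ k / p ^ (k + 1) := rfl
  have hpow : (q ^ k / p ^ (k + 1)) * (q ^ k / p ^ (k + 1)) ^ (m - 1)
      = xx p q k ^ m := by
    rw [hx]
    conv_rhs => rw [show m = m - 1 + 1 by omega]
    rw [pow_succ]
    ring
  have hP : pqPow p q 1 (q * (q ^ k / p ^ (k + 1))) (n - 1) = PP p q (n - 1) k := by
    rw [pqPow, PP]
    refine Finset.prod_congr rfl fun j _ => ?_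
    rw [hx]
    ring
  rw [FF, ← hpow, ← hP]
  ring

end Basic

end PQaux


theorem pqBeta_succ' (p q : ℝ) (hq : 0 < q) (hqp : q < p) (hp : p ≤ 1)
    (m n : ℕ) (hm : 1 ≤ m) (hn : 1 ≤ n) :
    pqBeta p q m (n + 1) =
      p ^ (n + m - 1) * ((p ^ n - q ^ n) / (p ^ (n + m) - q ^ (n + m))) *
        pqBeta p q m n := by
  obtain ⟨N, rfl⟩ : ∃ N, n = N + 1 := ⟨n - 1, by omega⟩
  have hb1 := PQaux.beta_eq hm (N + 1 + 1) (p := p) (q := q)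
  have hb0 := PQaux.beta_eq hm (N + 1) (p := p) (q := q)
  simp only [Nat.add_sub_cancel] at hb1 hb0
  have hkey := PQaux.key hq hqp hp m N hm (p := p) (q := q)
  have hlt : q ^ (N + 1 + m) < p ^ (N + 1 + m) :=
    pow_lt_pow_left₀ hqp hq.le (by omega)
  have hne : p ^ (N + 1 + m) - q ^ (N + 1 + m) ≠ 0 := sub_ne_zero.mpr hlt.ne'
  have he : N + 1 + m - 1 = N + m := by omega
  rw [hb1, hb0, he]
  field_simp
  linear_combination (p - q) * hkey
end
end

section
/- For 0 < q < p ≤ 1 and natural numbers m, n ≥ 1, the modified (p,q)-Beta function defined by B̃_{p,q}(m,n) = p^{m(m-1)/2} B_{p,q}(m,n) is symmetric: B̃_{p,q}(m,n) = B̃_{p,q}(n,m). -/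
noncomputable section

namespace PQAux

open Finset Filter

/-- the node points q^k/p^(k+1) -/
def xk (p q : ℝ) (k : ℕ) : ℝ := q ^ k / p ^ (k + 1)

/-- the basic series -/
def Tser (p q : ℝ) (m n : ℕ) : ℝ :=
  ∑' k : ℕ, (xk p q k) ^ m * pqPow p q 1 (q * xk p q k) n

/-- products of (p^s - q^s) -/
def Rw (p q : ℝ) (m n : ℕ) : ℝ := ∏ k ∈ Finset.range m, (p ^ (n+1+k) - q ^ (n+1+k))

lemma pqPow_p_mul (p q y : ℝ) (n : ℕ) :
    pqPow p q 1 (p*y) (n+1) = (1 - p*y) * (p^n * pqPow p q 1 (q*y) n) := by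
  unfold pqPow
  rw [Finset.prod_range_succ']
  have h : ∀ i ∈ Finset.range n, p^(i+1) * 1 - q^(i+1) * (p*y)
      = p * (p^i * 1 - q^i * (q*y)) := by intro i _; ring
  rw [Finset.prod_congr rfl h, Finset.prod_mul_distrib, Finset.prod_const, Finset.card_range]
  ring

lemma pqPow_q_mul (p q y : ℝ) (n : ℕ) :
    pqPow p q 1 (q*y) (n+1) = pqPow p q 1 (q*y) n * (p^n - q^n * (q*y)) := by
  unfold pqPow
  rw [Finset.prod_range_succ, mul_one]

/-- the key pointwise algebraic identity -/
lemma key_identity (p q y : ℝ) (m n : ℕ) :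
    (p*y)^m * pqPow p q 1 (p*y) (n+1) - (q*y)^m * pqPow p q 1 (q*y) (n+1)
      = y^m * pqPow p q 1 (q*y) n *
        (p^n * (p^m - q^m) - y * (p^(m+n+1) - q^(m+n+1))) := by
  rw [pqPow_p_mul, pqPow_q_mul]
  ring

lemma pqPow_one (p q : ℝ) (n : ℕ) : pqPow p q 1 1 (n+1) = 0 := by
  unfold pqPow
  exact Finset.prod_eq_zero (i := 0) (Finset.mem_range.2 (Nat.succ_pos n)) (by simp)

lemma pqPow_zero_arg (p q : ℝ) (n : ℕ) : pqPow p q 1 0 n = p ^ (n*(n-1)/2) := by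
  unfold pqPow
  simp only [mul_zero, sub_zero, mul_one]
  rw [Finset.prod_pow_eq_pow_sum, Finset.sum_range_id]

lemma even_helper (a b : ℕ) : Even (a*(a+2*b+1)) := by
  rcases Nat.even_or_odd a with h' | h'
  · exact h'.mul_right _
  · refine Even.mul_left ?_ _
    rw [Nat.even_iff]; rw [Nat.odd_iff] at h'; omega

lemma exp_symm (a b : ℕ) :
    (a+1)*a/2 + (b*(b+2*a+1))/2 = (b+1)*b/2 + (a*(a+2*b+1))/2 := by
  have h : (a+1)*a + b*(b+2*a+1) = (b+1)*b + a*(a+2*b+1) := by ring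
  have h1 : Even ((a+1)*a) := by rw [Nat.mul_comm]; exact Nat.even_mul_succ_self a
  have h2 : Even ((b+1)*b) := by rw [Nat.mul_comm]; exact Nat.even_mul_succ_self b
  have h3 : Even (b*(b+2*a+1)) := even_helper b a
  have h4 : Even (a*(a+2*b+1)) := even_helper a b
  obtain ⟨c1, e1⟩ := h1; obtain ⟨c2, e2⟩ := h2
  obtain ⟨c3, e3⟩ := h3; obtain ⟨c4, e4⟩ := h4
  omega

section Main

variable {p q : ℝ} (hq : 0 < q) (hqp : q < p) (hp : p ≤ 1)

include hq hqp hp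

lemma hp0 : 0 < p := hq.trans hqp

lemma xk_pos (k : ℕ) : 0 < xk p q k := by
  have := hp0 hq hqp hp
  unfold xk; positivity

lemma xk_eq (k : ℕ) : xk p q k = (q/p)^k / p := by
  have hp0 : (0:ℝ) < p := hq.trans hqp
  unfold xk
  rw [div_pow, pow_succ]
  field_simp

lemma r_lt_one : q / p < 1 := (div_lt_one (hq.trans hqp)).2 hqp

lemma xk_le (k : ℕ) : xk p q k ≤ 1/p := by
  have hp0 : (0:ℝ) < p := hq.trans hqp
  rw [xk_eq hq hqp hp]
  have h1 : (q/p)^k ≤ 1 := pow_le_one₀ (by positivity) (r_lt_one hq hqp hp).le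
  gcongr

lemma pqPow_bound (k : ℕ) (n : ℕ) :
    |pqPow p q 1 (q * xk p q k) n| ≤ (1 + 1/p)^n := by
  have hp0 : (0:ℝ) < p := hq.trans hqp
  have hx0 := (xk_pos hq hqp hp k).le
  have hx1 := xk_le hq hqp hp k
  unfold pqPow
  rw [Finset.abs_prod]
  calc ∏ j ∈ Finset.range n, |p^j * 1 - q^j * (q * xk p q k)|
      ≤ ∏ j ∈ Finset.range n, (1 + 1/p) := by
        apply Finset.prod_le_prod (fun _ _ => abs_nonneg _)
        intro j _
        have h1 : (0:ℝ) ≤ p^j := by positivity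
        have h2 : p^j ≤ 1 := pow_le_one₀ hp0.le hp
        have h3 : (0:ℝ) ≤ q^j := by positivity
        have h4 : q^j ≤ 1 := pow_le_one₀ hq.le (hqp.le.trans hp)
        have h5 : 0 ≤ q^j * (q * xk p q k) := by positivity
        have h6 : q^j * (q * xk p q k) ≤ 1/p := by
          have : q * xk p q k ≤ 1 * (1/p) := by
            apply mul_le_mul (hqp.le.trans hp) hx1 hx0 zero_le_one
          nlinarith
        rw [abs_le]
        constructor <;> nlinarith
    _ = (1 + 1/p)^n := by rw [Finset.prod_const, Finset.card_range]

lemma summable_u (m n : ℕ) :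
    Summable (fun k => (xk p q k)^(m+1) * pqPow p q 1 (q * xk p q k) n) := by
  have hp0 : (0:ℝ) < p := hq.trans hqp
  have hr0 : (0:ℝ) ≤ q/p := by positivity
  apply Summable.of_norm_bounded
    (g := fun k => ((1/p)^(m+1) * (1 + 1/p)^n) * (q/p)^k)
    (((summable_geometric_of_lt_one hr0 (r_lt_one hq hqp hp)).mul_left _))
  intro k
  have hx0 := (xk_pos hq hqp hp k).le
  have hx1 := xk_le hq hqp hp k
  have hxm : (xk p q k)^(m+1) ≤ (1/p)^m * ((q/p)^k / p) := by
    rw [pow_succ]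
    apply mul_le_mul (pow_le_pow_left₀ hx0 hx1 m) (xk_eq hq hqp hp k).le hx0
    positivity
  have hb := pqPow_bound hq hqp hp k n
  rw [Real.norm_eq_abs, abs_mul, abs_pow, abs_of_nonneg hx0]
  calc (xk p q k)^(m+1) * |pqPow p q 1 (q * xk p q k) n|
      ≤ ((1/p)^m * ((q/p)^k / p)) * (1 + 1/p)^n := by
        apply mul_le_mul hxm hb (abs_nonneg _) (by positivity)
    _ = ((1/p)^(m+1) * (1 + 1/p)^n) * (q/p)^k := by
        rw [pow_succ]; ring

/-- telescoping evaluation of the series of F(p x_k) - F(q x_k) -/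
lemma telescope (m n : ℕ)
    (hsum : Summable (fun k => (p * xk p q k)^m * pqPow p q 1 (p * xk p q k) (n+1)
      - (q * xk p q k)^m * pqPow p q 1 (q * xk p q k) (n+1))) :
    ∑' k : ℕ, ((p * xk p q k)^m * pqPow p q 1 (p * xk p q k) (n+1)
      - (q * xk p q k)^m * pqPow p q 1 (q * xk p q k) (n+1))
    = 0 - (0:ℝ)^m * pqPow p q 1 0 (n+1) := by
  have hp0 : (0:ℝ) < p := hq.trans hqp
  set F : ℝ → ℝ := fun y => y^m * pqPow p q 1 y (n+1) with hF
  have hpx : ∀ k, p * xk p q k = (q/p)^k := by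
    intro k
    rw [xk_eq hq hqp hp, div_pow]
    field_simp
  have hqx : ∀ k, q * xk p q k = (q/p)^(k+1) := by
    intro k
    rw [xk_eq hq hqp hp, div_pow, div_pow]
    field_simp
    ring
  have hfun : (fun k => (p * xk p q k)^m * pqPow p q 1 (p * xk p q k) (n+1)
      - (q * xk p q k)^m * pqPow p q 1 (q * xk p q k) (n+1))
      = fun k => F ((q/p)^k) - F ((q/p)^(k+1)) := by
    funext k; rw [hpx, hqx]
  have hcont : Continuous F := by
    apply Continuous.mul (continuous_pow m)
    unfold pqPow
    exact continuous_finset_prod _ (fun j _ => by fun_prop)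
  have hlim : Tendsto (fun K : ℕ => F ((q/p)^K)) atTop (nhds (F 0)) :=
    (hcont.tendsto 0).comp (tendsto_pow_atTop_nhds_zero_of_lt_one
      (by positivity) (r_lt_one hq hqp hp))
  have hps : ∀ K : ℕ, ∑ i ∈ Finset.range K, (F ((q/p)^i) - F ((q/p)^(i+1)))
      = F 1 - F ((q/p)^K) := by
    intro K
    rw [Finset.sum_range_sub' (fun i => F ((q/p)^i)) K, pow_zero]
  rw [hfun]
  have h1 : Tendsto (fun K : ℕ => ∑ i ∈ Finset.range K, (F ((q/p)^i) - F ((q/p)^(i+1))))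
      atTop (nhds (∑' k : ℕ, (F ((q/p)^k) - F ((q/p)^(k+1))))) := by
    apply HasSum.tendsto_sum_nat
    apply Summable.hasSum
    rw [← hfun]; exact hsum
  have h2 : Tendsto (fun K : ℕ => ∑ i ∈ Finset.range K, (F ((q/p)^i) - F ((q/p)^(i+1))))
      atTop (nhds (F 1 - F 0)) := by
    simp only [hps]
    exact tendsto_const_nhds.sub hlim
  have := tendsto_nhds_unique h1 h2
  rw [this]
  have hF1 : F 1 = 0 := by simp only [hF, one_pow, one_mul, pqPow_one]
  rw [hF1]

lemma base_case (n : ℕ) :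
    (p^(n+1) - q^(n+1)) * Tser p q 1 n = p^((n*(n+1))/2) := by
  have hkey : ∀ k : ℕ, (p * xk p q k)^0 * pqPow p q 1 (p * xk p q k) (n+1)
      - (q * xk p q k)^0 * pqPow p q 1 (q * xk p q k) (n+1)
      = -((p^(n+1) - q^(n+1)) * ((xk p q k)^(0+1) * pqPow p q 1 (q * xk p q k) n)) := by
    intro k
    rw [key_identity p q (xk p q k) 0 n]
    ring_nf
  have hsum : Summable (fun k => (p * xk p q k)^0 * pqPow p q 1 (p * xk p q k) (n+1)
      - (q * xk p q k)^0 * pqPow p q 1 (q * xk p q k) (n+1)) := by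
    simp only [hkey]
    exact (((summable_u hq hqp hp 0 n).mul_left (p^(n+1) - q^(n+1)))).neg
  have ht := telescope hq hqp hp 0 n hsum
  rw [tsum_congr hkey] at ht
  rw [tsum_neg, tsum_mul_left] at ht
  have : Tser p q 1 n = ∑' k : ℕ, (xk p q k)^(0+1) * pqPow p q 1 (q * xk p q k) n := rfl
  rw [← this] at ht
  rw [pqPow_zero_arg] at ht
  simp only [pow_zero, one_mul] at ht
  have he : (n+1)*((n+1)-1)/2 = n*(n+1)/2 := by
    rw [Nat.add_sub_cancel, Nat.mul_comm]
  rw [he] at ht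
  linarith

lemma rec_case (m n : ℕ) :
    (p^(m+n+2) - q^(m+n+2)) * Tser p q (m+2) n
      = p^n * (p^(m+1) - q^(m+1)) * Tser p q (m+1) n := by
  have hkey : ∀ k : ℕ, (p * xk p q k)^(m+1) * pqPow p q 1 (p * xk p q k) (n+1)
      - (q * xk p q k)^(m+1) * pqPow p q 1 (q * xk p q k) (n+1)
      = (p^n * (p^(m+1) - q^(m+1))) * ((xk p q k)^(m+1) * pqPow p q 1 (q * xk p q k) n)
        - (p^(m+n+2) - q^(m+n+2)) * ((xk p q k)^(m+1+1) * pqPow p q 1 (q * xk p q k) n) := by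
    intro k
    rw [key_identity p q (xk p q k) (m+1) n]
    have : m+1+n+1 = m+n+2 := by omega
    rw [this]
    ring
  have hsum : Summable (fun k => (p * xk p q k)^(m+1) * pqPow p q 1 (p * xk p q k) (n+1)
      - (q * xk p q k)^(m+1) * pqPow p q 1 (q * xk p q k) (n+1)) := by
    simp only [hkey]
    exact ((summable_u hq hqp hp m n).mul_left _).sub
      ((summable_u hq hqp hp (m+1) n).mul_left _)
  have ht := telescope hq hqp hp (m+1) n hsum
  rw [tsum_congr hkey] at ht
  rw [Summable.tsum_sub ((summable_u hq hqp hp m n).mul_left _)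
    ((summable_u hq hqp hp (m+1) n).mul_left _), tsum_mul_left, tsum_mul_left] at ht
  have e1 : Tser p q (m+1) n = ∑' k : ℕ, (xk p q k)^(m+1) * pqPow p q 1 (q * xk p q k) n := rfl
  have e2 : Tser p q (m+2) n = ∑' k : ℕ, (xk p q k)^(m+1+1) * pqPow p q 1 (q * xk p q k) n := rfl
  rw [← e1, ← e2] at ht
  have hz : ((0:ℝ))^(m+1) = 0 := by simp
  rw [hz] at ht
  linarith

lemma closed_form (m n : ℕ) :
    Tser p q (m+1) n * Rw p q (m+1) n = p^((n*(n+2*m+1))/2) * Rw p q m 0 := by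
  induction m with
  | zero =>
    have hb := base_case hq hqp hp n
    unfold Rw
    rw [Finset.prod_range_one, Finset.prod_range_zero]
    simp only [Nat.add_zero, mul_one]
    rw [mul_comm]
    rw [show n+2*0+1 = n+1 from by omega]
    exact hb
  | succ m ih =>
    have hrec := rec_case hq hqp hp m n
    have hRsplit : Rw p q (m+2) n = Rw p q (m+1) n * (p^(n+1+(m+1)) - q^(n+1+(m+1))) := by
      unfold Rw; rw [Finset.prod_range_succ]
    have hRsplit0 : Rw p q (m+1) 0 = Rw p q m 0 * (p^(m+1) - q^(m+1)) := by
      unfold Rw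
      rw [Finset.prod_range_succ]
      congr 1
      have h0 : (0:ℕ)+1+m = m+1 := by omega
      rw [h0]
    have hexp : (n*(n+2*(m+1)+1))/2 = n + (n*(n+2*m+1))/2 := by
      have h : n*(n+2*m+1) + 2*n = n*(n+2*(m+1)+1) := by ring
      have he : Even (n*(n+2*m+1)) := by
        rcases Nat.even_or_odd n with h' | h'
        · exact h'.mul_right _
        · refine Even.mul_left ?_ _
          rw [Nat.even_iff]; rw [Nat.odd_iff] at h'; omega
      obtain ⟨c, hc⟩ := he
      omega
    have hmn : m+1+n+1 = m+n+2 := by omega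
    calc Tser p q (m+2) n * Rw p q (m+2) n
        = ((p^(m+n+2) - q^(m+n+2)) * Tser p q (m+2) n) * Rw p q (m+1) n := by
          rw [hRsplit]
          have : n+1+(m+1) = m+n+2 := by omega
          rw [this]; ring
      _ = p^n * (p^(m+1) - q^(m+1)) * (Tser p q (m+1) n * Rw p q (m+1) n) := by
          rw [hrec]; ring
      _ = p^n * (p^(m+1) - q^(m+1)) * (p^((n*(n+2*m+1))/2) * Rw p q m 0) := by rw [ih]
      _ = p^((n*(n+2*(m+1)+1))/2) * Rw p q (m+1) 0 := by
          rw [hexp, pow_add, hRsplit0]; ring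

lemma Rw_pos (m n : ℕ) : 0 < Rw p q m n := by
  apply Finset.prod_pos
  intro k _
  have : q^(n+1+k) < p^(n+1+k) := pow_lt_pow_left₀ hqp hq.le (by omega)
  linarith

lemma pqBeta_eq (m n : ℕ) : pqBeta p q (m+1) (n+1) = (p - q) * Tser p q (m+1) n := by
  unfold pqBeta pqInt Tser
  congr 1
  apply tsum_congr
  intro k
  have : (q^k / p^(k+1)) = xk p q k := rfl
  rw [this]
  simp only [Nat.add_sub_cancel]
  ring


end Main

end PQAux

open PQAux in
theorem pqBeta_tilde_comm (p q : ℝ) (hq : 0 < q) (hqp : q < p) (hp : p ≤ 1)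
    (m n : ℕ) (hm : 1 ≤ m) (hn : 1 ≤ n) :
    p ^ (m * (m - 1) / 2) * pqBeta p q m n = p ^ (n * (n - 1) / 2) * pqBeta p q n m := by
  obtain ⟨m', rfl⟩ : ∃ m', m = m' + 1 := ⟨m - 1, by omega⟩
  obtain ⟨n', rfl⟩ : ∃ n', n = n' + 1 := ⟨n - 1, by omega⟩
  rw [pqBeta_eq hq hqp hp, pqBeta_eq hq hqp hp]
  simp only [Nat.add_sub_cancel]
  have hD : Rw p q (m'+n'+1) 0 ≠ 0 := (Rw_pos hq hqp hp _ _).ne'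
  apply mul_right_cancel₀ hD
  have hsplit : ∀ a b : ℕ, Rw p q (a+b+1) 0 = Rw p q (a+1) b * Rw p q b 0 := by
    intro a b
    unfold Rw
    have : a+b+1 = b + (a+1) := by omega
    rw [this, Finset.prod_range_add]
    rw [mul_comm]
    congr 1
    apply Finset.prod_congr rfl
    intro k _
    congr 2 <;> omega
  have h1 := closed_form hq hqp hp m' n'
  have h2 := closed_form hq hqp hp n' m'
  have hexp := exp_symm m' n'
  calc p^((m'+1)*m'/2) * ((p-q) * Tser p q (m'+1) n') * Rw p q (m'+n'+1) 0
      = p^((m'+1)*m'/2) * (p-q) * (Tser p q (m'+1) n' * Rw p q (m'+1) n') * Rw p q n' 0 := by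
        rw [hsplit m' n']; ring
    _ = p^((m'+1)*m'/2) * (p-q) * (p^((n'*(n'+2*m'+1))/2) * Rw p q m' 0) * Rw p q n' 0 := by
        rw [h1]
    _ = (p-q) * p^((m'+1)*m'/2 + (n'*(n'+2*m'+1))/2) * (Rw p q m' 0 * Rw p q n' 0) := by
        rw [pow_add]; ring
    _ = (p-q) * p^((n'+1)*n'/2 + (m'*(m'+2*n'+1))/2) * (Rw p q m' 0 * Rw p q n' 0) := by
        rw [hexp]
    _ = p^((n'+1)*n'/2) * (p-q) * (p^((m'*(m'+2*n'+1))/2) * Rw p q n' 0) * Rw p q m' 0 := by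
        rw [pow_add]; ring
    _ = p^((n'+1)*n'/2) * (p-q) * (Tser p q (n'+1) m' * Rw p q (n'+1) m') * Rw p q m' 0 := by
        rw [h2]
    _ = p^((n'+1)*n'/2) * ((p-q) * Tser p q (n'+1) m') * Rw p q (m'+n'+1) 0 := by
        have : m'+n'+1 = n'+m'+1 := by omega
        rw [this, hsplit n' m']; ring
end
end
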